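/- arXiv:2212.05000 — 3 statements merged into one kernel-verified Lean document; each statement's English description precedes it below -/
import Mathlib

section
/- Let $P \subset \mathbb{R}^n$ be a compact convex body containing $0$ in its interior, and let $f : P \to \mathbb{R}$ be a convex function attaining its minimum at $0$ with $f(0) \geq 0$. Then the function $F(t) := \int_{t\,\partial P} f\, d\sigma = t^{n-1}\int_{\partial P} f(tx)\, d\sigma(x)$ is convex on $[0,1]$. -/
/-!
For a fixed `x ∈ P` the function `φ(t) = f (t • x)` is convex, nonnegative and, having its minimum
at `t = 0`, nondecreasing on `[0, 1]`; so is `t ^ (n - 1)`. A product of nonnegative convex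
functions that vary together is convex, so `t ^ (n - 1) * f (t • x)` is convex on `[0, 1]` for
every `x ∈ ∂P ⊆ P`, and integrating a family of convex functions preserves convexity.
-/

open MeasureTheory Set

theorem ConvexOn.monotoneOn_of_isMinOn {𝕜 β : Type*} [Field 𝕜] [LinearOrder 𝕜]
    [IsStrictOrderedRing 𝕜] [AddCommMonoid β] [LinearOrder β] [IsOrderedCancelAddMonoid β]
    [Module 𝕜 β] [PosSMulStrictMono 𝕜 β] {s : Set 𝕜} {φ : 𝕜 → β} {a : 𝕜}
    (hφ : ConvexOn 𝕜 s φ) (ha : a ∈ s) (hmin : IsMinOn φ s a) :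
    MonotoneOn φ (s ∩ Ici a) := by
  intro y ⟨hy, hay⟩ z ⟨hz, _⟩ hyz
  rcases hay.eq_or_lt with rfl | hay
  · exact hmin hz
  · exact hφ.le_right_of_left_le'' ha hz hay hyz (hmin hy)

theorem ConvexOn.integral {E α : Type*} [AddCommMonoid E] [Module ℝ E] [MeasurableSpace α]
    {μ : Measure α} {I : Set E} {g : E → α → ℝ} (hI : Convex ℝ I)
    (hg : ∀ᵐ x ∂μ, ConvexOn ℝ I (fun t => g t x)) (hint : ∀ t ∈ I, Integrable (g t) μ) :
    ConvexOn ℝ I (fun t => ∫ x, g t x ∂μ) := by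
  refine ⟨hI, fun a ha b hb p q hp hq hpq => ?_⟩
  have hga : Integrable (fun x => p • g a x) μ := (hint a ha).smul p
  have hgb : Integrable (fun x => q • g b x) μ := (hint b hb).smul q
  calc ∫ x, g (p • a + q • b) x ∂μ ≤ ∫ x, p • g a x + q • g b x ∂μ :=
        integral_mono_ae (hint _ (hI ha hb hp hq hpq)) (hga.add hgb)
          (hg.mono fun x hx => hx.2 ha hb hp hq hpq)
    _ = p • ∫ x, g a x ∂μ + q • ∫ x, g b x ∂μ := by
        rw [integral_add hga hgb, integral_smul, integral_smul]

section

variable {E : Type*} [AddCommGroup E] [Module ℝ E] {P : Set E} {f : E → ℝ} {x : E}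

theorem ConvexOn.comp_smul_right_Icc (hf : ConvexOn ℝ P f) (h0 : (0 : E) ∈ P) (hx : x ∈ P) :
    ConvexOn ℝ (Icc (0 : ℝ) 1) (fun t => f (t • x)) :=
  (hf.comp_linearMap (LinearMap.smulRight LinearMap.id x)).subset
    (fun _ ht => hf.1.smul_mem_of_zero_mem h0 hx ht) (convex_Icc 0 1)

theorem ConvexOn.pow_mul_comp_smul_right (n : ℕ) (hf : ConvexOn ℝ P f) (h0 : (0 : E) ∈ P)
    (hmin : ∀ y ∈ P, f 0 ≤ f y) (hf0 : 0 ≤ f 0) (hx : x ∈ P) :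
    ConvexOn ℝ (Icc (0 : ℝ) 1) (fun t => t ^ n * f (t • x)) := by
  have hφ := hf.comp_smul_right_Icc h0 hx
  have hmem : ∀ t ∈ Icc (0 : ℝ) 1, t • x ∈ P := fun _ ht => hf.1.smul_mem_of_zero_mem h0 hx ht
  have hφmin : IsMinOn (fun t : ℝ => f (t • x)) (Icc 0 1) 0 := fun t ht => by
    simpa using hmin _ (hmem t ht)
  have hφmono : MonotoneOn (fun t : ℝ => f (t • x)) (Icc 0 1) := by
    simpa [inter_eq_left.mpr Icc_subset_Ici_self] using
      hφ.monotoneOn_of_isMinOn (left_mem_Icc.mpr zero_le_one) hφmin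
  have hpow : ConvexOn ℝ (Icc (0 : ℝ) 1) (fun t => t ^ n) :=
    (convexOn_pow n).subset Icc_subset_Ici_self (convex_Icc 0 1)
  exact hpow.mul hφ (fun t ht => pow_nonneg ht.1 n)
    (fun t ht => hf0.trans (hmin _ (hmem t ht)))
    ((pow_left_monotoneOn (n := n)).mono Icc_subset_Ici_self |>.monovaryOn hφmono)

end

theorem boundary_integral_convex_general {n : ℕ}
    (P : Set (Fin n → ℝ)) (hPc : IsCompact P)
    (h0 : (0 : Fin n → ℝ) ∈ interior P)
    (σ : Measure (Fin n → ℝ))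
    (f : (Fin n → ℝ) → ℝ) (hf : ConvexOn ℝ P f)
    (hmin : ∀ x ∈ P, f 0 ≤ f x) (hf0 : 0 ≤ f 0)
    (hint : ∀ t ∈ Set.Icc (0 : ℝ) 1, IntegrableOn (fun x => f (t • x)) (frontier P) σ) :
    ConvexOn ℝ (Set.Icc (0 : ℝ) 1)
      (fun t => t ^ (n - 1) * ∫ x in frontier P, f (t • x) ∂σ) := by
  have hfrontier : frontier P ⊆ P := hPc.isClosed.frontier_subset
  have hpointwise : ∀ᵐ x ∂σ.restrict (frontier P),
      ConvexOn ℝ (Icc (0 : ℝ) 1) (fun t => t ^ (n - 1) * f (t • x)) :=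
    ae_restrict_of_forall_mem isClosed_frontier.measurableSet fun x hx =>
      hf.pow_mul_comp_smul_right (n - 1) (interior_subset h0) hmin hf0 (hfrontier hx)
  simpa only [integral_const_mul] using
    ConvexOn.integral (convex_Icc 0 1) hpointwise fun t ht => (hint t ht).const_mul _

/-- Let `P` be a compact convex body containing `0` in its interior, `σ` a finite surface
measure on `∂P`, and `f` a convex function on `P` attaining its minimum at `0` with
`f(0) ≥ 0`. Then `F(t) = t^(n-1) ∫_{∂P} f(t x) dσ(x)` is convex on `[0,1]`. -/
theorem boundary_integral_convex {n : ℕ} (hn : 1 ≤ n)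
    (P : Set (Fin n → ℝ)) (hPc : IsCompact P) (hPconv : Convex ℝ P)
    (h0 : (0 : Fin n → ℝ) ∈ interior P)
    (σ : Measure (Fin n → ℝ)) [IsFiniteMeasure σ]
    (f : (Fin n → ℝ) → ℝ) (hf : ConvexOn ℝ P f)
    (hmin : ∀ x ∈ P, f 0 ≤ f x) (hf0 : 0 ≤ f 0)
    (hint : ∀ t ∈ Set.Icc (0 : ℝ) 1, IntegrableOn (fun x => f (t • x)) (frontier P) σ) :
    ConvexOn ℝ (Set.Icc (0 : ℝ) 1)
      (fun t => t ^ (n - 1) * ∫ x in frontier P, f (t • x) ∂σ) :=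
  boundary_integral_convex_general P hPc h0 σ f hf hmin hf0 hint
end

section
/- Let $P \subset \mathbb{R}^n$ be an integral polytope whose boundary $\partial kP$ (for a given $k$) admits a triangulation into unimodular $(n-1)$-simplices such that every lattice point $p \in \partial kP$ is contained in at most $n!$ simplices of the triangulation. Then for every convex function $f : kP \to \mathbb{R}$ with $f \geq 0$ on $\partial kP$, $\int_{\partial kP} f\, d\sigma \leq \sum_{p \in \partial kP \cap \mathbb{Z}^n} f(p)$. -/
/-!
On each unimodular simplex `A j '' Δ`, convexity bounds `f ∘ A j` by the affine interpolation of
its values at the `n` vertices. Each barycentric coordinate integrates to `1 / n!` over `Δ`, so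
`∫_Δ f ∘ A j ≤ ∑ᵢ f (A j vᵢ) / n!`. The vertices are lattice points of `∂(kP)`, and summing over
`j` each such point `p` is counted once per simplex having it as a vertex, at most `n!` times;
as `f p ≥ 0`, the total is at most `∑ₚ f p`.
-/

open MeasureTheory Pointwise

open Finset
open scoped ENNReal

def cornerSimplex (d : ℕ) (r : ℝ) : Set (Fin d → ℝ) :=
  {x | (∀ i, 0 ≤ x i) ∧ ∑ i, x i ≤ r}

theorem lintegral_Icc_ofReal {φ : ℝ → ℝ} {a b : ℝ} (hab : a ≤ b) (hφ : Continuous φ)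
    (hφ₀ : ∀ t ∈ Set.Icc a b, 0 ≤ φ t) :
    ∫⁻ t in Set.Icc a b, ENNReal.ofReal (φ t) = ENNReal.ofReal (∫ t in a..b, φ t) := by
  rw [intervalIntegral.integral_of_le hab, ← integral_Icc_eq_integral_Ioc,
    ofReal_integral_eq_lintegral_ofReal hφ.integrableOn_Icc
      ((ae_restrict_mem measurableSet_Icc).mono hφ₀)]

theorem integral_mul_one_sub_pow (d : ℕ) :
    ∫ t in (0 : ℝ)..1, t * (1 - t) ^ d = 1 / ((d + 1) * (d + 2)) := by
  have h := intervalIntegral.integral_comp_sub_left (fun u : ℝ => (1 - u) * u ^ d)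
    (a := 0) (b := 1) 1
  simp only [sub_sub_cancel, sub_zero, sub_self] at h
  rw [h]
  simp only [sub_mul, one_mul, ← pow_succ']
  rw [intervalIntegral.integral_sub ((continuous_pow d).intervalIntegrable 0 1)
    ((continuous_pow (d + 1)).intervalIntegrable 0 1)]
  simp [integral_pow]
  field_simp
  ring

namespace cornerSimplex

variable {d : ℕ}

theorem isClosed (d : ℕ) (r : ℝ) : IsClosed (cornerSimplex d r) := by
  simp only [cornerSimplex, Set.ofPred_and, Set.ofPred_forall]
  exact (isClosed_iInter fun i => isClosed_le continuous_const (continuous_apply i)).inter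
    (isClosed_le (continuous_finsetSum _ fun i _ => continuous_apply i) continuous_const)

theorem measurableSet (d : ℕ) (r : ℝ) : MeasurableSet (cornerSimplex d r) :=
  (isClosed d r).measurableSet

theorem isCompact (d : ℕ) (r : ℝ) : IsCompact (cornerSimplex d r) := by
  refine (isCompact_closedBall (0 : Fin d → ℝ) |r|).of_isClosed_subset (isClosed d r) ?_
  intro x ⟨hx, hsum⟩
  refine mem_closedBall_zero_iff.2 ((pi_norm_le_iff_of_nonneg (abs_nonneg r)).2 fun i => ?_)
  rw [Real.norm_of_nonneg (hx i)]
  exact ((single_le_sum (fun j _ => hx j) (mem_univ i)).trans hsum).trans (le_abs_self r)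

theorem insertNth_mem_iff (i : Fin (d + 1)) (r t : ℝ) (y : Fin d → ℝ) :
    Fin.insertNth i t y ∈ cornerSimplex (d + 1) r ↔
      t ∈ Set.Icc 0 r ∧ y ∈ cornerSimplex d (r - t) := by
  simp only [cornerSimplex, Set.mem_ofPred_eq, Set.mem_Icc, Fin.forall_iff_succAbove i,
    Fin.sum_univ_succAbove _ i, Fin.insertNth_apply_same, Fin.insertNth_apply_succAbove]
  constructor
  · rintro ⟨⟨ht, hy⟩, hsum⟩
    exact ⟨⟨ht, by linarith [sum_nonneg fun j (_ : j ∈ univ) => hy j]⟩, hy, by linarith⟩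
  · rintro ⟨⟨ht, -⟩, hy, hsum⟩
    exact ⟨⟨ht, hy⟩, by linarith⟩

theorem lintegral_comp_apply (i : Fin (d + 1)) (r : ℝ) {g : ℝ → ℝ≥0∞} (hg : Measurable g) :
    ∫⁻ x in cornerSimplex (d + 1) r, g (x i) =
      ∫⁻ t in Set.Icc 0 r, g t * volume (cornerSimplex d (r - t)) := by
  classical
  have he := (volume_preserving_piFinSuccAbove (fun _ : Fin (d + 1) => ℝ) i).symm
  have hmeas : Measurable ((cornerSimplex (d + 1) r).indicator fun x => g (x i)) :=
    (hg.comp (measurable_pi_apply i)).indicator (measurableSet _ _)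
  rw [← lintegral_indicator (measurableSet _ _), ← lintegral_indicator measurableSet_Icc,
    ← he.lintegral_comp hmeas, Measure.volume_eq_prod, lintegral_prod _ ?hmeas]
  case hmeas => exact (hmeas.comp he.measurable).aemeasurable
  congr 1 with t
  simp only [MeasurableEquiv.piFinSuccAbove_symm_apply, Fin.insertNthEquiv,
    Equiv.coe_fn_mk, Set.indicator_apply, insertNth_mem_iff, Fin.insertNth_apply_same]
  split_ifs with ht
  · simp only [ht, true_and]
    exact lintegral_indicator_const (measurableSet _ _) (g t)
  · simp [ht]

theorem volume_eq (d : ℕ) {r : ℝ} (hr : 0 ≤ r) :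
    volume (cornerSimplex d r) = ENNReal.ofReal (r ^ d / d.factorial) := by
  induction d generalizing r with
  | zero =>
    rw [show cornerSimplex 0 r = Set.univ from
      Set.eq_univ_of_forall fun x => ⟨finZeroElim, by simpa using hr⟩]
    simp [volume_pi]
  | succ d ih =>
    calc volume (cornerSimplex (d + 1) r) = ∫⁻ x in cornerSimplex (d + 1) r, 1 :=
          (setLIntegral_one _).symm
    _ = ∫⁻ t in Set.Icc 0 r, ENNReal.ofReal ((r - t) ^ d / d.factorial) := by
        refine (lintegral_comp_apply 0 r measurable_const).trans
          (setLIntegral_congr_fun measurableSet_Icc fun t ht => ?_)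
        rw [one_mul, ih (sub_nonneg.2 ht.2)]
    _ = _ := by
        rw [lintegral_Icc_ofReal hr (by fun_prop) fun t ht => by
          have := sub_nonneg.2 ht.2; positivity]
        congr 1
        simp [intervalIntegral.integral_comp_sub_left (fun u => u ^ d / d.factorial) r,
          Nat.factorial_succ, div_div, mul_comm]

theorem integral_apply (i : Fin d) :
    ∫ x in cornerSimplex d 1, x i = 1 / (d + 1).factorial := by
  cases d with
  | zero => exact i.elim0
  | succ d =>
    rw [integral_eq_lintegral_of_nonneg_ae ((ae_restrict_mem (measurableSet _ _)).mono
      fun x hx => hx.1 i) (measurable_pi_apply i).aestronglyMeasurable,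
      lintegral_comp_apply i 1 ENNReal.measurable_ofReal]
    calc (∫⁻ t in Set.Icc 0 1, ENNReal.ofReal t * volume (cornerSimplex d (1 - t))).toReal
        = (∫⁻ t in Set.Icc 0 1, ENNReal.ofReal (t * (1 - t) ^ d / d.factorial)).toReal := by
          congr 1
          refine setLIntegral_congr_fun measurableSet_Icc fun t ht => ?_
          rw [volume_eq d (sub_nonneg.2 ht.2), ← ENNReal.ofReal_mul ht.1, mul_div_assoc]
      _ = 1 / (d + 2).factorial := by
          rw [lintegral_Icc_ofReal zero_le_one (by fun_prop) fun t ht => by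
              have := sub_nonneg.2 ht.2; have := ht.1; positivity,
            intervalIntegral.integral_div, integral_mul_one_sub_pow,
            ENNReal.toReal_ofReal (by positivity)]
          simp only [Nat.factorial_succ]
          push_cast
          field_simp
          ring

theorem integral_one : ∫ _ in cornerSimplex d 1, (1 : ℝ) = 1 / d.factorial := by
  rw [setIntegral_const, measureReal_def, volume_eq d zero_le_one,
    ENNReal.toReal_ofReal (by positivity), one_pow, smul_eq_mul, mul_one]

def vertex : Option (Fin d) → Fin d → ℝ
  | none => 0
  | some i => Pi.single i 1

def baryCoord : Option (Fin d) → (Fin d → ℝ) → ℝ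
  | none, x => 1 - ∑ i, x i
  | some i, x => x i

theorem vertex_mem (o : Option (Fin d)) : vertex o ∈ cornerSimplex d 1 := by
  cases o with
  | none => exact ⟨fun _ => le_rfl, by simp [vertex]⟩
  | some i => exact ⟨fun j => by simp [vertex, Pi.single_apply]; split_ifs <;> norm_num,
      by simp [vertex]⟩

theorem exists_vertex_apply_eq_intCast (o : Option (Fin d)) (i : Fin d) :
    ∃ z : ℤ, vertex o i = z := by
  cases o with
  | none => exact ⟨0, by simp [vertex]⟩
  | some j => exact ⟨if i = j then 1 else 0, by simp [vertex, Pi.single_apply]⟩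

theorem vertex_injective : Function.Injective (vertex (d := d)) := by
  rintro (_ | i) (_ | j) h
  · rfl
  · simpa [vertex] using congrFun h j
  · simpa [vertex] using congrFun h i
  · simpa [vertex, Pi.single_apply, eq_comm] using congrFun h j

theorem continuous_baryCoord (o : Option (Fin d)) : Continuous (baryCoord o) := by
  cases o with
  | none => exact continuous_const.sub (continuous_finsetSum _ fun i _ => continuous_apply i)
  | some i => exact continuous_apply i

theorem baryCoord_nonneg {x : Fin d → ℝ} (hx : x ∈ cornerSimplex d 1) (o : Option (Fin d)) :
    0 ≤ baryCoord o x := by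
  cases o with
  | none => exact sub_nonneg.2 hx.2
  | some i => exact hx.1 i

theorem sum_baryCoord (x : Fin d → ℝ) : ∑ o, baryCoord o x = 1 := by
  simp [Fintype.sum_option, baryCoord]

theorem sum_baryCoord_smul_vertex (x : Fin d → ℝ) : ∑ o, baryCoord o x • vertex o = x := by
  ext j
  simp [Fintype.sum_option, baryCoord, vertex, Pi.single_apply]

theorem integral_baryCoord (o : Option (Fin d)) :
    ∫ x in cornerSimplex d 1, baryCoord o x = 1 / (d + 1).factorial := by
  cases o with
  | some i => exact integral_apply i
  | none =>
    have hint : ∀ i : Fin d, IntegrableOn (fun x : Fin d → ℝ => x i) (cornerSimplex d 1) :=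
      fun i => (continuous_apply i).continuousOn.integrableOn_compact (isCompact d 1)
    simp only [baryCoord]
    rw [integral_sub (continuous_const.continuousOn.integrableOn_compact (isCompact d 1))
      (integrable_finsetSum _ fun i _ => hint i), integral_finsetSum _ fun i _ => hint i,
      integral_one]
    simp only [integral_apply, sum_const, card_univ, Fintype.card_fin, nsmul_eq_mul,
      Nat.factorial_succ]
    push_cast
    field_simp
    ring

theorem sum_baryCoord_smul_map_vertex {E : Type*} [AddCommGroup E] [Module ℝ E]
    (B : (Fin d → ℝ) →ᵃ[ℝ] E) (x : Fin d → ℝ) :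
    ∑ o, baryCoord o x • B (vertex o) = B x := by
  have h := univ.map_affineCombination vertex (fun o => baryCoord o x) (sum_baryCoord x) B
  rwa [affineCombination_eq_linear_combination _ _ _ (sum_baryCoord x),
    affineCombination_eq_linear_combination _ _ _ (sum_baryCoord x),
    sum_baryCoord_smul_vertex, eq_comm] at h

end cornerSimplex

open cornerSimplex

section Convex

variable {d : ℕ} {E : Type*} [AddCommGroup E] [Module ℝ E] {s : Set E} {f : E → ℝ}

theorem ConvexOn.comp_le_sum_baryCoord_mul (hf : ConvexOn ℝ s f) (B : (Fin d → ℝ) →ᵃ[ℝ] E)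
    (hB : ∀ o, B (vertex o) ∈ s) {x : Fin d → ℝ} (hx : x ∈ cornerSimplex d 1) :
    f (B x) ≤ ∑ o, baryCoord o x * f (B (vertex o)) := by
  simpa only [sum_baryCoord_smul_map_vertex, smul_eq_mul] using
    hf.map_sum_le (fun o _ => baryCoord_nonneg hx o) (sum_baryCoord x) fun o _ => hB o

theorem ConvexOn.setIntegral_comp_cornerSimplex_le (hf : ConvexOn ℝ s f)
    (B : (Fin d → ℝ) →ᵃ[ℝ] E) (hB : ∀ o, B (vertex o) ∈ s)
    (hf₀ : ∀ x ∈ cornerSimplex d 1, 0 ≤ f (B x)) :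
    ∫ x in cornerSimplex d 1, f (B x) ≤ (∑ o, f (B (vertex o))) / (d + 1).factorial := by
  have hint : ∀ o,
      IntegrableOn (fun x => baryCoord o x * f (B (vertex o))) (cornerSimplex d 1) :=
    fun o => ((continuous_baryCoord o).mul continuous_const).continuousOn.integrableOn_compact
      (isCompact d 1)
  calc ∫ x in cornerSimplex d 1, f (B x)
      ≤ ∫ x in cornerSimplex d 1, ∑ o, baryCoord o x * f (B (vertex o)) :=
        integral_mono_of_nonneg ((ae_restrict_mem (measurableSet d 1)).mono hf₀)
          (integrable_finsetSum _ fun o _ => hint o)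
          ((ae_restrict_mem (measurableSet d 1)).mono fun x hx =>
            hf.comp_le_sum_baryCoord_mul B hB hx)
    _ = (∑ o, f (B (vertex o))) / (d + 1).factorial := by
        simp only [integral_finsetSum _ fun o _ => hint o, integral_mul_const, integral_baryCoord,
          sum_div]
        exact sum_congr rfl fun o _ => by ring

end Convex

theorem Bornology.IsBounded.finite_setOf_forall_exists_intCast {ι : Type*} [Fintype ι]
    {s : Set (ι → ℝ)} (hs : Bornology.IsBounded s) :
    {x ∈ s | ∀ i, ∃ z : ℤ, x i = z}.Finite := by
  refine (ZSpan.setFinite_inter (Pi.basisFun ℝ ι) hs).subset fun x ⟨hx, hxℤ⟩ => ⟨hx, ?_⟩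
  rw [SetLike.mem_coe, (Pi.basisFun ℝ ι).mem_span_iff_repr_mem ℤ]
  intro i
  obtain ⟨z, hz⟩ := hxℤ i
  exact ⟨z, by simp [hz]⟩

theorem Finset.sum_sum_le_mul_sum_of_ncard_range_le {ι κ E : Type*} [Fintype ι] [Fintype κ]
    {L : Finset E} {v : ι → κ → E} {g : E → ℝ} {N : ℕ}
    (hv : ∀ j o, v j o ∈ L) (hinj : ∀ j, Function.Injective (v j))
    (hN : ∀ p ∈ L, {j | p ∈ Set.range (v j)}.ncard ≤ N) (hg : ∀ p ∈ L, 0 ≤ g p) :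
    ∑ j, ∑ o, g (v j o) ≤ N * ∑ p ∈ L, g p := by
  classical
  calc ∑ j, ∑ o, g (v j o) = ∑ j, ∑ p ∈ L, if p ∈ Set.range (v j) then g p else 0 := by
        refine sum_congr rfl fun j _ => ?_
        rw [← sum_filter, ← sum_image fun o _ o' _ h => hinj j h]
        congr 1
        ext p
        simp only [mem_image, mem_univ, true_and, mem_filter, Set.mem_range]
        exact ⟨fun ⟨o, ho⟩ => ho ▸ ⟨hv j o, o, rfl⟩, fun h => h.2⟩
    _ = ∑ p ∈ L, #{j | p ∈ Set.range (v j)} * g p := by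
        rw [sum_comm]
        exact sum_congr rfl fun p _ => by rw [← sum_filter, sum_const, nsmul_eq_mul]
    _ ≤ ∑ p ∈ L, N * g p := by
        refine sum_le_sum fun p hp => mul_le_mul_of_nonneg_right ?_ (hg p hp)
        have h := hN p hp
        rw [← coe_filter_univ, Set.ncard_coe_finset] at h
        exact_mod_cast h
    _ = N * ∑ p ∈ L, g p := (mul_sum _ _ _).symm

theorem boundary_integral_le_lattice_sum_general {n : ℕ} (hn : 1 ≤ n)
    (V : Set (Fin n → ℝ)) (hV : V.Finite)
    (P : Set (Fin n → ℝ)) (hP : P = convexHull ℝ V)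
    (k : ℕ)
    (m : ℕ) (A : Fin m → ((Fin (n - 1) → ℝ) →ᵃ[ℝ] (Fin n → ℝ)))
    (hinj : ∀ j, Function.Injective (A j))
    (hlat : ∀ j, ∀ x : Fin (n - 1) → ℝ, (∀ i, ∃ z : ℤ, x i = (z : ℝ)) →
      ∀ i, ∃ z : ℤ, A j x i = (z : ℝ))
    (Δ : Set (Fin (n - 1) → ℝ))
    (hΔ : Δ = {x : Fin (n - 1) → ℝ | (∀ i, 0 ≤ x i) ∧ ∑ i, x i ≤ 1})
    (hcover : frontier ((k : ℝ) • P) = ⋃ j, A j '' Δ)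
    (hcount : ∀ p ∈ frontier ((k : ℝ) • P), (∀ i, ∃ z : ℤ, p i = (z : ℝ)) →
      {j : Fin m | p ∈ A j '' Δ}.ncard ≤ n.factorial)
    (f : (Fin n → ℝ) → ℝ) (hf : ConvexOn ℝ ((k : ℝ) • P) f)
    (hfpos : ∀ x ∈ frontier ((k : ℝ) • P), 0 ≤ f x) :
    (∑ j, ∫ x in Δ, f (A j x)) ≤
      ∑ᶠ p ∈ {x ∈ frontier ((k : ℝ) • P) | ∀ i, ∃ z : ℤ, x i = (z : ℝ)}, f p := by
  obtain ⟨d, rfl⟩ : ∃ d, n = d + 1 := ⟨n - 1, by omega⟩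
  obtain rfl : Δ = cornerSimplex d 1 := hΔ
  have hQ : IsCompact ((k : ℝ) • P) := hP ▸ (hV.isCompact_convexHull (𝕜 := ℝ)).smul _
  have hface : ∀ j, A j '' cornerSimplex d 1 ⊆ frontier ((k : ℝ) • P) :=
    fun j => hcover ▸ Set.subset_iUnion (fun j => A j '' cornerSimplex d 1) j
  have hvert : ∀ j o, A j (vertex o) ∈ frontier ((k : ℝ) • P) :=
    fun j o => hface j ⟨_, vertex_mem o, rfl⟩
  have hL := (hQ.isBounded.subset hQ.isClosed.frontier_subset).finite_setOf_forall_exists_intCast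
  rw [finsum_mem_eq_finite_toFinset_sum _ hL]
  have hmult : ∀ p ∈ hL.toFinset,
      {j | p ∈ Set.range (A j ∘ vertex)}.ncard ≤ (d + 1).factorial := fun p hp => by
    obtain ⟨hp, hpℤ⟩ := hL.mem_toFinset.1 hp
    refine (Set.ncard_le_ncard ?_ (Set.toFinite _)).trans (hcount p hp hpℤ)
    rintro j ⟨o, rfl⟩
    exact ⟨_, vertex_mem o, rfl⟩
  have hcard : ∑ j, ∑ o, f (A j (vertex o)) ≤ (d + 1).factorial * ∑ p ∈ hL.toFinset, f p :=
    sum_sum_le_mul_sum_of_ncard_range_le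
      (fun j o => hL.mem_toFinset.2 ⟨hvert j o, hlat j _ (exists_vertex_apply_eq_intCast o)⟩)
      (fun j => (hinj j).comp vertex_injective) hmult fun p hp => hfpos p (hL.mem_toFinset.1 hp).1
  calc ∑ j, ∫ x in cornerSimplex d 1, f (A j x)
      ≤ ∑ j, (∑ o, f (A j (vertex o))) / (d + 1).factorial :=
        sum_le_sum fun j _ => hf.setIntegral_comp_cornerSimplex_le (A j)
          (fun o => hQ.isClosed.frontier_subset (hvert j o))
          fun x hx => hfpos _ (hface j ⟨x, hx, rfl⟩)
    _ ≤ ((d + 1).factorial * ∑ p ∈ hL.toFinset, f p) / (d + 1).factorial := by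
        rw [← sum_div]
        gcongr
    _ = ∑ p ∈ hL.toFinset, f p := by field_simp

/-- If the boundary of `kP` is triangulated by unimodular `(n-1)`-simplices (images of the
standard simplex `Δ` under injective lattice-preserving affine maps `A j`) such that every
lattice point of `∂(kP)` lies in at most `n!` simplices, then for every convex `f ≥ 0` on
`∂(kP)`, the lattice-normalized boundary integral `∫_{∂kP} f dσ = ∑_j ∫_Δ f(A_j x) dx`
is at most `∑_{p ∈ ∂kP ∩ ℤⁿ} f(p)`. -/
theorem boundary_integral_le_lattice_sum {n : ℕ} (hn : 1 ≤ n)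
    (V : Set (Fin n → ℝ)) (hV : V.Finite)
    (hVint : ∀ v ∈ V, ∀ i, ∃ z : ℤ, v i = (z : ℝ))
    (P : Set (Fin n → ℝ)) (hP : P = convexHull ℝ V)
    (hfull : (interior P).Nonempty)
    (k : ℕ) (hk : 1 ≤ k)
    (m : ℕ) (A : Fin m → ((Fin (n - 1) → ℝ) →ᵃ[ℝ] (Fin n → ℝ)))
    (hinj : ∀ j, Function.Injective (A j))
    (hlat : ∀ j, ∀ x : Fin (n - 1) → ℝ, (∀ i, ∃ z : ℤ, x i = (z : ℝ)) →
      ∀ i, ∃ z : ℤ, A j x i = (z : ℝ))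
    (Δ : Set (Fin (n - 1) → ℝ))
    (hΔ : Δ = {x : Fin (n - 1) → ℝ | (∀ i, 0 ≤ x i) ∧ ∑ i, x i ≤ 1})
    (hcover : frontier ((k : ℝ) • P) = ⋃ j, A j '' Δ)
    (hcount : ∀ p ∈ frontier ((k : ℝ) • P), (∀ i, ∃ z : ℤ, p i = (z : ℝ)) →
      {j : Fin m | p ∈ A j '' Δ}.ncard ≤ n.factorial)
    (f : (Fin n → ℝ) → ℝ) (hf : ConvexOn ℝ ((k : ℝ) • P) f)
    (hfpos : ∀ x ∈ frontier ((k : ℝ) • P), 0 ≤ f x) :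
    (∑ j, ∫ x in Δ, f (A j x)) ≤
      ∑ᶠ p ∈ {x ∈ frontier ((k : ℝ) • P) | ∀ i, ∃ z : ℤ, x i = (z : ℝ)}, f p :=
  boundary_integral_le_lattice_sum_general hn V hV P hP k m A hinj hlat Δ hΔ hcover hcount f hf
    hfpos
end

section
/- Let $P_1 \subset \mathbb{R}^{n_1}$ and $P_2 \subset \mathbb{R}^{n_2}$ be integral polytopes, $k \in \mathbb{N}$, and suppose that for all convex functions $g_1$ on $kP_1$ and $g_2$ on $kP_2$ one has $\frac{1}{\mathrm{Vol}(kP_i)}\int_{kP_i} g_i\, dV \leq \frac{1}{\chi(kP_i)}\sum_{p \in kP_i \cap \mathbb{Z}^{n_i}} g_i(p)$ for $i = 1,2$. Then for every convex function $f$ on $k(P_1 \times P_2)$, $\frac{1}{\mathrm{Vol}(k(P_1\times P_2))}\int_{k(P_1\times P_2)} f\, dV \leq \frac{1}{\chi(k(P_1\times P_2))}\sum_{p \in k(P_1\times P_2)\cap \mathbb{Z}^{n_1+n_2}} f(p)$. -/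
/-!
By Fubini, the integral over `kP₁ × kP₂` is the iterated integral of `F x = ∫_{kP₂} f (x, y) dy`
over `kP₁`. The partial integral `F` is convex, so the hypothesis on `P₁` bounds its average by
its average over the lattice points `p` of `kP₁`; each slice `f (p, ·)` is convex, so the
hypothesis on `P₂` bounds `F p / Vol (kP₂)` by the average of `f (p, ·)` over the lattice points
of `kP₂`. Volumes and lattice point counts are multiplicative. Fubini applies because a convex
function on a polytope is integrable: it is bounded above by its maximum over the vertices, and
bounded below by reflecting through an interior point.
-/

open MeasureTheory Pointwise Set Bornology Metric Topology

section Slices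

variable {𝕜 E F β : Type*} [Field 𝕜] [LinearOrder 𝕜] [AddCommGroup E] [AddCommGroup F]
  [Module 𝕜 E] [Module 𝕜 F] [AddCommMonoid β] [PartialOrder β] [SMul 𝕜 β]
  {s : Set E} {t : Set F} {f : E × F → β}

theorem ConvexOn.prodMk_left (hf : ConvexOn 𝕜 (s ×ˢ t) f) {x : E} (hx : x ∈ s) :
    ConvexOn 𝕜 t (fun y => f (x, y)) := by
  have h := hf.comp_affineMap ((AffineMap.const 𝕜 F x).prod (AffineMap.id 𝕜 F))
  rwa [show _ ⁻¹' (s ×ˢ t) = t from ext fun y => by simp [hx]] at h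

theorem ConvexOn.prodMk_right (hf : ConvexOn 𝕜 (s ×ˢ t) f) {y : F} (hy : y ∈ t) :
    ConvexOn 𝕜 s (fun x => f (x, y)) := by
  have h := hf.comp_affineMap ((AffineMap.id 𝕜 E).prod (AffineMap.const 𝕜 E y))
  rwa [show _ ⁻¹' (s ×ˢ t) = s from ext fun x => by simp [hy]] at h

end Slices

theorem Set.sep_prod_sep {α β : Type*} (s : Set α) (t : Set β) (p : α → Prop) (q : β → Prop) :
    {x ∈ s | p x} ×ˢ {y ∈ t | q y} = {z ∈ s ×ˢ t | p z.1 ∧ q z.2} := by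
  ext
  simp [and_and_and_comm]

theorem Bornology.IsBounded.finite_integerPoints {ι : Type*} [Fintype ι] {s : Set (ι → ℝ)}
    (hs : IsBounded s) : {x ∈ s | ∀ i, ∃ z : ℤ, x i = z}.Finite := by
  let φ : (ι → ℤ) → ι → ℝ := fun z i => z i
  have hφ : IsClosedEmbedding φ := .piMap fun _ => Int.isClosedEmbedding_coe_real
  refine ((hφ.isCompact_preimage hs.isCompact_closure).finite_of_discrete.image φ).subset ?_
  rintro x ⟨hx, hxz⟩
  choose z hz using hxz
  obtain rfl : φ z = x := funext fun i => (hz i).symm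
  exact mem_image_of_mem φ (subset_closure hx)

section Integrability

variable {E : Type*} [NormedAddCommGroup E] [NormedSpace ℝ E]

theorem ConvexOn.bddBelow_of_ball_subset {s : Set E} {f : E → ℝ} (hf : ConvexOn ℝ s f)
    (hs : IsBounded s) {x₀ : E} {r : ℝ} (hr : 0 < r) (hball : ball x₀ r ⊆ s)
    (hbdd : BddAbove (f '' s)) : BddBelow (f '' s) := by
  obtain ⟨M, hM⟩ := hbdd
  obtain ⟨R, hR, hsR⟩ := hs.subset_closedBall_lt 0 x₀
  set c := r / (2 * R)
  have hc : 0 < c := by positivity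
  refine ⟨((1 + c) * f x₀ - M) / c, ?_⟩
  rintro _ ⟨y, hy, rfl⟩
  -- `x₀` lies between `y` and the point `z` of the ball opposite to `y`
  set z := x₀ + c • (x₀ - y)
  have hz : z ∈ s := by
    refine hball ?_
    have hyR : ‖x₀ - y‖ ≤ R := by simpa [dist_eq_norm'] using hsR hy
    calc dist z x₀ = c * ‖x₀ - y‖ := by simp [z, dist_eq_norm, norm_smul, hc.le]
      _ ≤ c * R := by gcongr
      _ < r := by simp only [c]; field_simp; linarith
  have hcomb : (c / (1 + c)) • y + (1 / (1 + c)) • z = x₀ := by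
    simp only [z]
    match_scalars <;> field_simp; ring
  have hconv := hf.2 hy hz (show 0 ≤ c / (1 + c) by positivity)
    (show 0 ≤ 1 / (1 + c) by positivity) (by field_simp; ring)
  rw [hcomb, smul_eq_mul, smul_eq_mul] at hconv
  have hfz : f z ≤ M := hM (mem_image_of_mem f hz)
  rw [div_le_iff₀ hc]
  field_simp at hconv
  nlinarith

theorem ConvexOn.integrableOn_convexHull [MeasurableSpace E] [BorelSpace E]
    [FiniteDimensional ℝ E] (μ : Measure E) [μ.IsAddHaarMeasure] {V : Set E} (hV : V.Finite)
    {f : E → ℝ} (hf : ConvexOn ℝ (convexHull ℝ V) f) : IntegrableOn f (convexHull ℝ V) μ := by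
  set s := convexHull ℝ V
  have hs : IsCompact s := hV.isCompact_convexHull ℝ
  rw [← integrableOn_congr_set_ae
    (interior_ae_eq_of_null_frontier ((convex_convexHull ℝ V).addHaar_frontier μ))]
  rcases (interior s).eq_empty_or_nonempty with hempty | ⟨x₀, hx₀⟩
  · rw [hempty]
    exact integrableOn_empty
  obtain ⟨r, hr, hball⟩ := isOpen_iff.mp isOpen_interior x₀ hx₀
  have hbddAbove : BddAbove (f '' s) :=
    hf.bddAbove_convexHull (subset_convexHull ℝ V) (hV.image f).bddAbove
  have hbddBelow : BddBelow (f '' s) :=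
    hf.bddBelow_of_ball_subset hs.isBounded hr (hball.trans interior_subset) hbddAbove
  obtain ⟨C, hC⟩ := isBounded_iff_forall_norm_le.mp
    (isBounded_iff_bddBelow_bddAbove.mpr ⟨hbddBelow, hbddAbove⟩)
  refine .of_bound ((measure_mono interior_subset).trans_lt hs.measure_lt_top)
    (hf.continuousOn_interior.aestronglyMeasurable isOpen_interior.measurableSet) C ?_
  exact ae_restrict_of_forall_mem isOpen_interior.measurableSet
    fun x hx => hC _ (mem_image_of_mem f (interior_subset hx))

end Integrability

/-- For `S = kP` and `A = kP ∩ ℤⁿ` this is the hypothesis on `P` in `product_chow_semistable`. -/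
def ChowInequality {E : Type*} [AddCommGroup E] [Module ℝ E] [MeasurableSpace E]
    (μ : Measure E) (S A : Set E) : Prop :=
  ∀ g : E → ℝ, ConvexOn ℝ S g →
    (∫ x in S, g x ∂μ) / (μ S).toReal ≤ (∑ᶠ p ∈ A, g p) / (A.ncard : ℝ)

section Product

variable {E F : Type*} [NormedAddCommGroup E] [NormedSpace ℝ E] [NormedAddCommGroup F]
  [NormedSpace ℝ F] [MeasurableSpace E] [BorelSpace E] [FiniteDimensional ℝ E]
  [MeasurableSpace F] [BorelSpace F] [FiniteDimensional ℝ F]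
  {μ : Measure E} [μ.IsAddHaarMeasure] {ν : Measure F} [ν.IsAddHaarMeasure]

-- Where a volume or a lattice point count vanishes, the corresponding average is `0`
-- (as `x / 0 = 0`), and every step of the `calc` below stays valid.
theorem ChowInequality.prod {V : Set E} {W : Set F} (hV : V.Finite) (hW : W.Finite)
    {A : Set E} {B : Set F} (hA : A.Finite) (hB : B.Finite) (hAV : A ⊆ convexHull ℝ V)
    (h₁ : ChowInequality μ (convexHull ℝ V) A) (h₂ : ChowInequality ν (convexHull ℝ W) B) :
    ChowInequality (μ.prod ν) (convexHull ℝ V ×ˢ convexHull ℝ W) (A ×ˢ B) := by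
  lift A to Finset E using hA
  lift B to Finset F using hB
  intro f hf
  set S := convexHull ℝ V
  set T := convexHull ℝ W
  have hf_int : IntegrableOn f (S ×ˢ T) (μ.prod ν) := by
    rw [← convexHull_prod] at hf ⊢
    exact hf.integrableOn_convexHull _ (hV.prod hW)
  have hpartial : ConvexOn ℝ S (fun x => ∫ y in T, f (x, y) ∂ν) :=
    integral_convexOn_of_integrand_ae (convex_convexHull ℝ V)
      (ae_restrict_of_forall_mem (hW.isCompact_convexHull ℝ).isClosed.measurableSet
        fun _ hy => hf.prodMk_right hy)
      fun _ hx => (hf.prodMk_left hx).integrableOn_convexHull ν hW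
  rw [← Finset.coe_product, finsum_mem_coe_finset, ncard_coe_finset, Finset.card_product,
    Finset.sum_product, Measure.prod_prod, ENNReal.toReal_mul, setIntegral_prod f hf_int]
  push_cast
  calc (∫ x in S, ∫ y in T, f (x, y) ∂ν ∂μ) / ((μ S).toReal * (ν T).toReal)
      = ((∫ x in S, ∫ y in T, f (x, y) ∂ν ∂μ) / (μ S).toReal) / (ν T).toReal := by
        rw [div_div]
    _ ≤ ((∑ p ∈ A, ∫ y in T, f (p, y) ∂ν) / A.card) / (ν T).toReal := by
        gcongr ?_ / _
        simpa only [finsum_mem_coe_finset, ncard_coe_finset] using h₁ _ hpartial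
    _ = (∑ p ∈ A, (∫ y in T, f (p, y) ∂ν) / (ν T).toReal) / A.card := by
        rw [← Finset.sum_div]; ring
    _ ≤ (∑ p ∈ A, (∑ q ∈ B, f (p, q)) / B.card) / A.card := by
        gcongr (∑ p ∈ A, ?_) / _ with p hp
        simpa only [finsum_mem_coe_finset, ncard_coe_finset] using h₂ _ (hf.prodMk_left (hAV hp))
    _ = (∑ p ∈ A, ∑ q ∈ B, f (p, q)) / (A.card * B.card) := by
        rw [← Finset.sum_div]; ring

end Product

theorem product_chow_semistable_general {n₁ n₂ : ℕ}
    (V₁ : Set (Fin n₁ → ℝ)) (hV₁ : V₁.Finite)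
    (P₁ : Set (Fin n₁ → ℝ)) (hP₁ : P₁ = convexHull ℝ V₁)
    (V₂ : Set (Fin n₂ → ℝ)) (hV₂ : V₂.Finite)
    (P₂ : Set (Fin n₂ → ℝ)) (hP₂ : P₂ = convexHull ℝ V₂)
    (k : ℕ)
    (h₁ : ∀ g₁ : (Fin n₁ → ℝ) → ℝ, ConvexOn ℝ ((k : ℝ) • P₁) g₁ →
      (∫ x in (k : ℝ) • P₁, g₁ x) / (volume ((k : ℝ) • P₁)).toReal ≤
        (∑ᶠ p ∈ {x ∈ (k : ℝ) • P₁ | ∀ i, ∃ z : ℤ, x i = (z : ℝ)}, g₁ p) /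
          ({x ∈ (k : ℝ) • P₁ | ∀ i, ∃ z : ℤ, x i = (z : ℝ)}.ncard : ℝ))
    (h₂ : ∀ g₂ : (Fin n₂ → ℝ) → ℝ, ConvexOn ℝ ((k : ℝ) • P₂) g₂ →
      (∫ y in (k : ℝ) • P₂, g₂ y) / (volume ((k : ℝ) • P₂)).toReal ≤
        (∑ᶠ p ∈ {y ∈ (k : ℝ) • P₂ | ∀ i, ∃ z : ℤ, y i = (z : ℝ)}, g₂ p) /
          ({y ∈ (k : ℝ) • P₂ | ∀ i, ∃ z : ℤ, y i = (z : ℝ)}.ncard : ℝ))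
    (f : (Fin n₁ → ℝ) × (Fin n₂ → ℝ) → ℝ)
    (hf : ConvexOn ℝ (((k : ℝ) • P₁) ×ˢ ((k : ℝ) • P₂)) f) :
    (∫ x in ((k : ℝ) • P₁) ×ˢ ((k : ℝ) • P₂), f x) /
        (volume (((k : ℝ) • P₁) ×ˢ ((k : ℝ) • P₂))).toReal ≤
      (∑ᶠ p ∈ {q ∈ ((k : ℝ) • P₁) ×ˢ ((k : ℝ) • P₂) |
          (∀ i, ∃ z : ℤ, q.1 i = (z : ℝ)) ∧ (∀ i, ∃ z : ℤ, q.2 i = (z : ℝ))}, f p) /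
        ({q ∈ ((k : ℝ) • P₁) ×ˢ ((k : ℝ) • P₂) |
          (∀ i, ∃ z : ℤ, q.1 i = (z : ℝ)) ∧ (∀ i, ∃ z : ℤ, q.2 i = (z : ℝ))}.ncard : ℝ) := by
  subst hP₁ hP₂
  simp only [← convexHull_smul] at h₁ h₂ hf ⊢
  have hW₁ := hV₁.smul_set (a := (k : ℝ))
  have hW₂ := hV₂.smul_set (a := (k : ℝ))
  have hprod := ChowInequality.prod hW₁ hW₂
    (hW₁.isCompact_convexHull ℝ).isBounded.finite_integerPoints
    (hW₂.isCompact_convexHull ℝ).isBounded.finite_integerPoints (sep_subset _ _) h₁ h₂ f hf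
  rwa [Set.sep_prod_sep, ← Measure.volume_eq_prod] at hprod

/-- If the Chow inequality (continuous average ≤ discrete average over lattice points) holds
for all convex functions on `kP₁` and on `kP₂`, then it holds for all convex functions on
`k(P₁ × P₂) = kP₁ × kP₂`. -/
theorem product_chow_semistable {n₁ n₂ : ℕ}
    (V₁ : Set (Fin n₁ → ℝ)) (hV₁ : V₁.Finite)
    (hV₁int : ∀ v ∈ V₁, ∀ i, ∃ z : ℤ, v i = (z : ℝ))
    (P₁ : Set (Fin n₁ → ℝ)) (hP₁ : P₁ = convexHull ℝ V₁)
    (V₂ : Set (Fin n₂ → ℝ)) (hV₂ : V₂.Finite)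
    (hV₂int : ∀ v ∈ V₂, ∀ i, ∃ z : ℤ, v i = (z : ℝ))
    (P₂ : Set (Fin n₂ → ℝ)) (hP₂ : P₂ = convexHull ℝ V₂)
    (k : ℕ) (hk : 1 ≤ k)
    (h₁ : ∀ g₁ : (Fin n₁ → ℝ) → ℝ, ConvexOn ℝ ((k : ℝ) • P₁) g₁ →
      (∫ x in (k : ℝ) • P₁, g₁ x) / (volume ((k : ℝ) • P₁)).toReal ≤
        (∑ᶠ p ∈ {x ∈ (k : ℝ) • P₁ | ∀ i, ∃ z : ℤ, x i = (z : ℝ)}, g₁ p) /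
          ({x ∈ (k : ℝ) • P₁ | ∀ i, ∃ z : ℤ, x i = (z : ℝ)}.ncard : ℝ))
    (h₂ : ∀ g₂ : (Fin n₂ → ℝ) → ℝ, ConvexOn ℝ ((k : ℝ) • P₂) g₂ →
      (∫ y in (k : ℝ) • P₂, g₂ y) / (volume ((k : ℝ) • P₂)).toReal ≤
        (∑ᶠ p ∈ {y ∈ (k : ℝ) • P₂ | ∀ i, ∃ z : ℤ, y i = (z : ℝ)}, g₂ p) /
          ({y ∈ (k : ℝ) • P₂ | ∀ i, ∃ z : ℤ, y i = (z : ℝ)}.ncard : ℝ))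
    (f : (Fin n₁ → ℝ) × (Fin n₂ → ℝ) → ℝ)
    (hf : ConvexOn ℝ (((k : ℝ) • P₁) ×ˢ ((k : ℝ) • P₂)) f) :
    (∫ x in ((k : ℝ) • P₁) ×ˢ ((k : ℝ) • P₂), f x) /
        (volume (((k : ℝ) • P₁) ×ˢ ((k : ℝ) • P₂))).toReal ≤
      (∑ᶠ p ∈ {q ∈ ((k : ℝ) • P₁) ×ˢ ((k : ℝ) • P₂) |
          (∀ i, ∃ z : ℤ, q.1 i = (z : ℝ)) ∧ (∀ i, ∃ z : ℤ, q.2 i = (z : ℝ))}, f p) /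
        ({q ∈ ((k : ℝ) • P₁) ×ˢ ((k : ℝ) • P₂) |
          (∀ i, ∃ z : ℤ, q.1 i = (z : ℝ)) ∧ (∀ i, ∃ z : ℤ, q.2 i = (z : ℝ))}.ncard : ℝ) :=
  product_chow_semistable_general V₁ hV₁ P₁ hP₁ V₂ hV₂ P₂ hP₂ k h₁ h₂ f hf
end
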